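/- arXiv:1910.13465 — 6 statements merged into one kernel-verified Lean document; each statement's English description precedes it below -/
import Mathlib

section
/- For every graph G, there exists a fractional independence weighting φ achieving the fractional independence number α*(G) such that every vertex receives weight 0, 1/2, or 1. -/
/-!
Threshold rounding. For τ ∈ [0, 1] round `φ v` to `1` if `2 φ v - 1 > τ`, to `0` if
`1 - 2 φ v > τ`, and to `1/2` otherwise. On an edge `2 φ u - 1 ≤ 1 - 2 φ w`, so an endpoint
rounded to `1` forces the other one to `0`: every rounding is again a fractional independence
weighting, now half-integral. Averaged over τ ∈ [0, 1] the rounding of `v` is exactly `φ v`, so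
`∑ φ` is at most the largest sum of a half-integral weighting, and there are only finitely many
of those.
-/

open Finset

/-- A fractional independence weighting of a graph. -/
def IsFIW {V : Type*} (G : SimpleGraph V) (φ : V → ℝ) : Prop :=
  (∀ v, 0 ≤ φ v ∧ φ v ≤ 1) ∧ ∀ u w, G.Adj u w → φ u + φ w ≤ 1

/-- The fractional independence number of a graph. -/
noncomputable def fracIndepNum {V : Type*} [Fintype V] (G : SimpleGraph V) : ℝ :=
  sSup {s : ℝ | ∃ φ : V → ℝ, IsFIW G φ ∧ s = ∑ v, φ v}

/-- An independent set of a graph. -/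
def IsIndepSet {V : Type*} (G : SimpleGraph V) (s : Set V) : Prop :=
  s.Pairwise fun u w => ¬ G.Adj u w

/-- The independence number of a graph. -/
noncomputable def indepNum {V : Type*} [Fintype V] (G : SimpleGraph V) : ℕ :=
  sSup {n : ℕ | ∃ s : Finset V, IsIndepSet G ↑s ∧ s.card = n}

open MeasureTheory

noncomputable def halfRound {V : Type*} (φ : V → ℝ) (τ : ℝ) (v : V) : ℝ :=
  1 / 2 + ((Set.Iio (2 * φ v - 1)).indicator 1 τ - (Set.Iio (1 - 2 * φ v)).indicator 1 τ) / 2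

lemma antitone_indicator_Iio_one (a : ℝ) : Antitone ((Set.Iio a).indicator (1 : ℝ → ℝ)) := by
  intro x y hxy
  simp only [Set.indicator_apply, Set.mem_Iio, Pi.one_apply]
  split_ifs <;> linarith

lemma integral_indicator_Iio_one {a : ℝ} (ha : a ≤ 1) :
    ∫ τ in (0 : ℝ)..1, (Set.Iio a).indicator 1 τ = max a 0 := by
  have hIoo : Set.Iio a ∩ Set.Ioc 0 1 = Set.Ioo 0 a := by
    ext x
    simp only [Set.mem_inter_iff, Set.mem_Iio, Set.mem_Ioc, Set.mem_Ioo]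
    constructor
    · rintro ⟨hxa, hx0, -⟩
      exact ⟨hx0, hxa⟩
    · rintro ⟨hx0, hxa⟩
      exact ⟨hxa, hx0, by linarith⟩
  rw [intervalIntegral.integral_of_le zero_le_one, integral_indicator_one measurableSet_Iio,
    measureReal_restrict_apply measurableSet_Iio, hIoo, Real.volume_real_Ioo, sub_zero]

section

variable {V : Type*}

lemma halfRound_eq_zero_or_half_or_one (φ : V → ℝ) (τ : ℝ) (v : V) :
    halfRound φ τ v = 0 ∨ halfRound φ τ v = 1 / 2 ∨ halfRound φ τ v = 1 := by
  simp only [halfRound, Set.indicator_apply, Set.mem_Iio, Pi.one_apply]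
  split_ifs <;> norm_num

lemma isFIW_halfRound {G : SimpleGraph V} {φ : V → ℝ} (hφ : IsFIW G φ) (τ : ℝ) :
    IsFIW G (halfRound φ τ) := by
  refine ⟨fun v => ?_, fun u w huw => ?_⟩
  · rcases halfRound_eq_zero_or_half_or_one φ τ v with h | h | h <;> rw [h] <;> norm_num
  · have hedge := hφ.2 u w huw
    simp only [halfRound, Set.indicator_apply, Set.mem_Iio, Pi.one_apply]
    split_ifs <;> linarith

lemma intervalIntegrable_halfRound (φ : V → ℝ) (v : V) (a b : ℝ) :
    IntervalIntegrable (fun τ => halfRound φ τ v) volume a b :=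
  intervalIntegrable_const.add
    (((antitone_indicator_Iio_one _).intervalIntegrable.sub
      (antitone_indicator_Iio_one _).intervalIntegrable).div_const 2)

lemma integral_halfRound {φ : V → ℝ} {v : V} (h0 : 0 ≤ φ v) (h1 : φ v ≤ 1) :
    ∫ τ in (0 : ℝ)..1, halfRound φ τ v = φ v := by
  have hpos : IntervalIntegrable ((Set.Iio (2 * φ v - 1)).indicator 1) volume 0 1 :=
    (antitone_indicator_Iio_one _).intervalIntegrable
  have hneg : IntervalIntegrable ((Set.Iio (1 - 2 * φ v)).indicator 1) volume 0 1 :=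
    (antitone_indicator_Iio_one _).intervalIntegrable
  simp only [halfRound]
  rw [intervalIntegral.integral_add intervalIntegrable_const ((hpos.sub hneg).div_const 2),
    intervalIntegral.integral_const, intervalIntegral.integral_div,
    intervalIntegral.integral_sub hpos hneg,
    integral_indicator_Iio_one (by linarith), integral_indicator_Iio_one (by linarith)]
  have hmax := max_zero_sub_max_neg_zero_eq_self (2 * φ v - 1)
  rw [neg_sub] at hmax
  simp only [sub_zero, smul_eq_mul]
  linarith

lemma sum_le_of_forall_sum_halfRound_le [Fintype V] {G : SimpleGraph V} {φ : V → ℝ}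
    (hφ : IsFIW G φ) {M : ℝ} (hM : ∀ τ, ∑ v, halfRound φ τ v ≤ M) : ∑ v, φ v ≤ M := by
  have hint : ∀ v ∈ univ, IntervalIntegrable (fun τ => halfRound φ τ v) volume 0 1 :=
    fun v _ => intervalIntegrable_halfRound φ v 0 1
  calc ∑ v, φ v = ∑ v, ∫ τ in (0 : ℝ)..1, halfRound φ τ v :=
        (sum_congr rfl fun v _ => integral_halfRound (hφ.1 v).1 (hφ.1 v).2).symm
    _ = ∫ τ in (0 : ℝ)..1, ∑ v, halfRound φ τ v := (intervalIntegral.integral_finsetSum hint).symm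
    _ ≤ ∫ _ in (0 : ℝ)..1, M :=
        intervalIntegral.integral_mono_on zero_le_one
          (by simpa only [← sum_fn] using IntervalIntegrable.sum univ hint)
          intervalIntegrable_const fun τ _ => hM τ
    _ = M := by simp

lemma finite_setOf_forall_eq_zero_or_half_or_one [Finite V] :
    {ψ : V → ℝ | ∀ v, ψ v = 0 ∨ ψ v = 1 / 2 ∨ ψ v = 1}.Finite := by
  refine (Set.Finite.pi (t := fun _ => {0, 1 / 2, 1}) fun _ => Set.toFinite _).subset ?_
  intro ψ hψ v _
  simpa using hψ v

end

/-- Nemhauser–Trotter: some optimal fractional independence weighting is half-integral. -/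
theorem stmt_0 {V : Type*} [Fintype V] (G : SimpleGraph V) :
    ∃ φ : V → ℝ, IsFIW G φ ∧ (∑ v, φ v) = fracIndepNum G ∧
      ∀ v, φ v = 0 ∨ φ v = 1 / 2 ∨ φ v = 1 := by
  have hzero : IsFIW G 0 := ⟨fun _ => by norm_num, fun _ _ _ => by norm_num⟩
  obtain ⟨ψ, ⟨hψ, hψhalf⟩, hψmax⟩ := Set.exists_max_image
    {ψ : V → ℝ | IsFIW G ψ ∧ ∀ v, ψ v = 0 ∨ ψ v = 1 / 2 ∨ ψ v = 1} (fun ψ => ∑ v, ψ v)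
    (finite_setOf_forall_eq_zero_or_half_or_one.subset fun _ hψ => hψ.2)
    ⟨0, hzero, fun _ => Or.inl rfl⟩
  refine ⟨ψ, hψ, ?_, hψhalf⟩
  rw [fracIndepNum, eq_comm]
  refine IsGreatest.csSup_eq ⟨⟨ψ, hψ, rfl⟩, ?_⟩
  rintro _ ⟨φ, hφ, rfl⟩
  exact sum_le_of_forall_sum_halfRound_le hφ fun τ =>
    hψmax (halfRound φ τ) ⟨isFIW_halfRound hφ τ, halfRound_eq_zero_or_half_or_one φ τ⟩
end

section
/- For every a ≥ 3 and b ≥ 2, the graph G_{a,b} obtained from a clique K_a by adding a vertex u adjacent to one vertex of K_a, and adding b further vertices all adjacent only to u, satisfies α*(G_{a,b}) = b + a/2, α(G_{a,b}) = b + 1, and has a + b + 1 vertices; consequently α*(G_{a,b}) > max(α(G_{a,b}), (a+b+1)/2). -/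
open Finset

/-- The graph `G_{a,b}`: a clique on vertices `0,…,a-1`, a vertex `u = a` joined to the
clique vertex `0`, and `b` further vertices `a+1,…,a+b` joined only to `u`. -/
def Gab (a b : ℕ) : SimpleGraph (Fin (a + b + 1)) :=
  SimpleGraph.fromRel (fun x y =>
    ((x : ℕ) < a ∧ (y : ℕ) < a) ∨ ((x : ℕ) = a ∧ ((y : ℕ) = 0 ∨ a < (y : ℕ))))

/-!
The weighting `1/2` on the clique, `0` on the hub `u` and `1` on the leaves attains
`b + a/2`, and it is optimal: a clique on `a ≥ 2` vertices carries fractional weight at most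
`a/2`, while the star formed by `u` and its `b` leaves carries at most `b`, since `u` can be paired
with one leaf. The same decomposition bounds an independent set: it meets the clique at most once
and the star in at most `b` vertices, and `{0} ∪ leaves` shows that `b + 1` is attained.
-/

variable {V : Type*} {G : SimpleGraph V}

lemma fracIndepNum_eq_of_forall_sum_le [Fintype V] {c : ℝ} (φ₀ : V → ℝ) (hφ₀ : IsFIW G φ₀)
    (hsum : ∑ v, φ₀ v = c) (hle : ∀ φ, IsFIW G φ → ∑ v, φ v ≤ c) : fracIndepNum G = c :=
  IsGreatest.csSup_eq ⟨⟨φ₀, hφ₀, hsum.symm⟩, by rintro _ ⟨φ, hφ, rfl⟩; exact hle φ hφ⟩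

lemma indepNum_eq_of_forall_card_le [Fintype V] {n : ℕ} (s₀ : Finset V)
    (hs₀ : IsIndepSet G ↑s₀) (hcard : #s₀ = n) (hle : ∀ s : Finset V, IsIndepSet G ↑s → #s ≤ n) :
    indepNum G = n :=
  IsGreatest.csSup_eq ⟨⟨s₀, hs₀, hcard⟩, by rintro _ ⟨s, hs, rfl⟩; exact hle s hs⟩

namespace IsFIW

variable {φ : V → ℝ}

lemma sum_le_of_isClique (hφ : IsFIW G φ) {s : Finset V} (hs : G.IsClique (s : Set V))
    (hcard : 2 ≤ #s) : ∑ v ∈ s, φ v ≤ #s / 2 := by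
  classical
  by_cases hbig : ∃ v ∈ s, 1 / 2 < φ v
  swap
  · push Not at hbig
    simpa [div_eq_mul_inv, mul_comm] using sum_le_card_nsmul s φ (1 / 2) hbig
  obtain ⟨v, hv, hbig⟩ := hbig
  have hrest : ∑ w ∈ s.erase v, φ w ≤ #(s.erase v) * (1 - φ v) := by
    simpa using sum_le_card_nsmul (s.erase v) φ (1 - φ v) fun w hw =>
      le_sub_iff_add_le'.2 (hφ.2 v w (hs hv (mem_erase.1 hw).2 (mem_erase.1 hw).1.symm))
  rw [← add_sum_erase s φ hv]
  rw [card_erase_of_mem hv, Nat.cast_pred (by omega)] at hrest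
  have hcard' : (2 : ℝ) ≤ #s := by exact_mod_cast hcard
  -- `φ v + (#s - 1) (1 - φ v) ≤ #s / 2` amounts to `(#s - 2) (φ v - 1/2) ≥ 0`.
  nlinarith [mul_nonneg (sub_nonneg.2 hcard') (sub_nonneg.2 hbig.le)]

lemma add_sum_le_card (hφ : IsFIW G φ) {u : V} {L : Finset V} (hL : L.Nonempty)
    (hadj : ∀ ℓ ∈ L, G.Adj u ℓ) : φ u + ∑ ℓ ∈ L, φ ℓ ≤ #L := by
  classical
  obtain ⟨ℓ, hℓ⟩ := hL
  have hrest : ∑ w ∈ L.erase ℓ, φ w ≤ #(L.erase ℓ) := by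
    simpa using sum_le_card_nsmul (L.erase ℓ) φ 1 fun w _ => (hφ.1 w).2
  rw [← add_sum_erase L φ hℓ]
  rw [card_erase_of_mem hℓ, Nat.cast_pred (card_pos.2 ⟨ℓ, hℓ⟩)] at hrest
  linarith [hφ.2 u ℓ (hadj ℓ hℓ)]

end IsFIW

namespace IsIndepSet

variable [DecidableEq V] {s : Finset V}

lemma card_inter_le_one_of_isClique (hs : IsIndepSet G ↑s) {C : Finset V}
    (hC : G.IsClique (C : Set V)) : #(s ∩ C) ≤ 1 := by
  refine card_le_one.2 fun x hx y hy => ?_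
  rw [mem_inter] at hx hy
  by_contra hne
  exact hs hx.1 hy.1 hne (hC hx.2 hy.2 hne)

lemma card_inter_insert_le_card (hs : IsIndepSet G ↑s) {u : V} {L : Finset V}
    (hL : L.Nonempty) (hadj : ∀ ℓ ∈ L, G.Adj u ℓ) : #(s ∩ insert u L) ≤ #L := by
  by_cases hu : u ∈ s
  · have hsub : s ∩ insert u L ⊆ {u} := by
      intro x hx
      obtain ⟨hxs, hxuL⟩ := mem_inter.1 hx
      rcases mem_insert.1 hxuL with rfl | hxL
      · exact mem_singleton_self x
      · exact absurd (hadj x hxL) (hs hu hxs (hadj x hxL).ne)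
    exact (card_le_card hsub).trans (by simpa using hL.card_pos)
  · refine card_le_card fun x hx => ?_
    obtain ⟨hxs, hxuL⟩ := mem_inter.1 hx
    exact (mem_insert.1 hxuL).resolve_left (by rintro rfl; exact hu hxs)

end IsIndepSet

lemma Fin.sum_univ_eq_sum_Iio_add_add_sum_Ioi {M : Type*} [AddCommMonoid M] {n : ℕ}
    (u : Fin n) (f : Fin n → M) : ∑ v, f v = ∑ v ∈ Iio u, f v + (f u + ∑ v ∈ Ioi u, f v) := by
  rw [← sum_filter_add_sum_filter_not univ (· < u), filter_gt_eq_Iio, ← sum_insert notMem_Ioi_self,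
    Ioi_insert]
  congr 2
  ext v
  simp

lemma Fin.card_le_card_inter_Iio_add_card_inter_Ici {n : ℕ} (u : Fin n) (s : Finset (Fin n)) :
    #s ≤ #(s ∩ Iio u) + #(s ∩ Ici u) := by
  refine (card_le_card fun v hv => ?_).trans (card_union_le _ _)
  rcases lt_or_ge v u with h | h <;> simp [hv, h]

namespace Gab

variable {a b : ℕ}

/-- The vertex `u` of `G_{a,b}`; the clique lies below it and the leaves above it. -/
def hub (a b : ℕ) : Fin (a + b + 1) := ⟨a, by omega⟩

lemma card_Iio_hub : #(Iio (hub a b)) = a := Fin.card_Iio _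

lemma card_Ioi_hub : #(Ioi (hub a b)) = b := by
  rw [Fin.card_Ioi]
  simp [hub]

lemma isClique_Iio_hub : (Gab a b).IsClique (Iio (hub a b) : Set (Fin (a + b + 1))) := by
  intro x hx y hy hne
  simp only [coe_Iio, Set.mem_Iio, Fin.lt_def, hub] at hx hy
  simp only [Gab, SimpleGraph.fromRel_adj]
  exact ⟨hne, Or.inl (Or.inl ⟨hx, hy⟩)⟩

lemma adj_hub_of_mem_Ioi {ℓ : Fin (a + b + 1)} (hℓ : ℓ ∈ Ioi (hub a b)) :
    (Gab a b).Adj (hub a b) ℓ := by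
  rw [mem_Ioi] at hℓ
  rw [Gab, SimpleGraph.fromRel_adj]
  exact ⟨hℓ.ne, Or.inl (Or.inr ⟨rfl, Or.inr hℓ⟩)⟩

lemma nonempty_Ioi_hub (hb : 1 ≤ b) : (Ioi (hub a b)).Nonempty :=
  card_pos.1 (card_Ioi_hub.symm ▸ hb)


lemma sum_le_of_isFIW (ha : 2 ≤ a) (hb : 1 ≤ b) {φ : Fin (a + b + 1) → ℝ}
    (hφ : IsFIW (Gab a b) φ) : ∑ v, φ v ≤ b + a / 2 := by
  have hclique := hφ.sum_le_of_isClique isClique_Iio_hub (card_Iio_hub.symm ▸ ha)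
  have hstar := hφ.add_sum_le_card (nonempty_Ioi_hub hb) fun _ => adj_hub_of_mem_Ioi
  rw [card_Iio_hub] at hclique
  rw [card_Ioi_hub] at hstar
  rw [Fin.sum_univ_eq_sum_Iio_add_add_sum_Ioi (hub a b)]
  linarith

noncomputable def optimalWeight (a b : ℕ) (v : Fin (a + b + 1)) : ℝ :=
  if v < hub a b then 1 / 2 else if v = hub a b then 0 else 1

lemma isFIW_optimalWeight : IsFIW (Gab a b) (optimalWeight a b) := by
  refine ⟨fun v => by unfold optimalWeight; split_ifs <;> norm_num, fun x y hxy => ?_⟩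
  obtain ⟨hne, hxy⟩ := (SimpleGraph.fromRel_adj _ x y).1 hxy
  rw [Ne, Fin.ext_iff] at hne
  simp only [optimalWeight, Fin.lt_def, Fin.ext_iff, hub]
  split_ifs <;> first | omega | norm_num

lemma sum_optimalWeight : ∑ v, optimalWeight a b v = b + a / 2 := by
  have hclique (v) (hv : v ∈ Iio (hub a b)) : optimalWeight a b v = 1 / 2 := if_pos (mem_Iio.1 hv)
  have hleaf (v) (hv : v ∈ Ioi (hub a b)) : optimalWeight a b v = 1 := by
    simp [optimalWeight, (mem_Ioi.1 hv).not_gt, (mem_Ioi.1 hv).ne']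
  have hhub : optimalWeight a b (hub a b) = 0 := by simp [optimalWeight]
  rw [Fin.sum_univ_eq_sum_Iio_add_add_sum_Ioi (hub a b), sum_congr rfl hclique,
    sum_congr rfl hleaf, hhub, sum_const, sum_const, card_Iio_hub, card_Ioi_hub]
  simp only [nsmul_eq_mul, mul_one, zero_add]
  ring

lemma card_le_of_isIndepSet (hb : 1 ≤ b) {s : Finset (Fin (a + b + 1))}
    (hs : IsIndepSet (Gab a b) ↑s) : #s ≤ b + 1 := by
  have hclique := hs.card_inter_le_one_of_isClique isClique_Iio_hub
  have hstar := hs.card_inter_insert_le_card (nonempty_Ioi_hub hb) fun _ => adj_hub_of_mem_Ioi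
  rw [Ioi_insert, card_Ioi_hub] at hstar
  have := Fin.card_le_card_inter_Iio_add_card_inter_Ici (hub a b) s
  omega

def maxIndepSet (a b : ℕ) : Finset (Fin (a + b + 1)) := insert 0 (Ioi (hub a b))

lemma card_maxIndepSet : #(maxIndepSet a b) = b + 1 := by
  rw [maxIndepSet, card_insert_of_notMem (by simp), card_Ioi_hub]

lemma isIndepSet_maxIndepSet (ha : 1 ≤ a) : IsIndepSet (Gab a b) ↑(maxIndepSet a b) := by
  intro x hx y hy hne hxy
  simp only [maxIndepSet, coe_insert, coe_Ioi, Set.mem_insert_iff, Set.mem_Ioi, Fin.lt_def,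
    Fin.ext_iff, hub, Fin.val_zero] at hx hy
  rw [Ne, Fin.ext_iff] at hne
  rw [Gab, SimpleGraph.fromRel_adj] at hxy
  omega

end Gab

/-- For `a ≥ 3`, `b ≥ 2`, the graph `G_{a,b}` has `a+b+1` vertices,
`α*(G_{a,b}) = b + a/2`, `α(G_{a,b}) = b + 1`, and `α* > max(α, (a+b+1)/2)`. -/
theorem stmt_5 (a b : ℕ) (ha : 3 ≤ a) (hb : 2 ≤ b) :
    fracIndepNum (Gab a b) = (b : ℝ) + (a : ℝ) / 2 ∧
    indepNum (Gab a b) = b + 1 ∧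
    Fintype.card (Fin (a + b + 1)) = a + b + 1 ∧
    fracIndepNum (Gab a b) >
      max ((indepNum (Gab a b) : ℝ)) (((a : ℝ) + b + 1) / 2) := by
  have hfrac : fracIndepNum (Gab a b) = (b : ℝ) + (a : ℝ) / 2 :=
    fracIndepNum_eq_of_forall_sum_le _ Gab.isFIW_optimalWeight Gab.sum_optimalWeight
      fun _ => Gab.sum_le_of_isFIW (by omega) (by omega)
  have hindep : indepNum (Gab a b) = b + 1 :=
    indepNum_eq_of_forall_card_le _ (Gab.isIndepSet_maxIndepSet (by omega))
      Gab.card_maxIndepSet fun _ => Gab.card_le_of_isIndepSet (by omega)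
  refine ⟨hfrac, hindep, Fintype.card_fin _, ?_⟩
  have ha' : (3 : ℝ) ≤ a := by exact_mod_cast ha
  have hb' : (2 : ℝ) ≤ b := by exact_mod_cast hb
  rw [hfrac, hindep, gt_iff_lt, max_lt_iff]
  push_cast
  constructor <;> linarith
end

section
/- There are infinitely many (pairwise non-isomorphic) graphs G with α*(G) > max(α(G), |V(G)|/2). -/
open Finset

/-!
Take `G = G_{a,2}`: the leaves `0, 1` hang from a vertex `2`, which is joined to the vertex `3` of
the clique `{3, …, a + 2}`. Weight `1` on the leaves, `0` on `2` and `1/2` on the clique is a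
fractional independent set of weight `2 + a/2 = |V|/2 + 1/2`, whereas `G` is covered by the three
cliques `{0, 2}`, `{1}` and `{3, …, a + 2}`, so `α(G) ≤ 3`. For `a ≥ 3` both bounds are beaten.
-/

lemma IsFIW.sum_le_card {V : Type*} [Fintype V] {G : SimpleGraph V} {φ : V → ℝ}
    (hφ : IsFIW G φ) : ∑ v, φ v ≤ Fintype.card V := by
  simpa using Finset.sum_le_sum fun v (_ : v ∈ univ) => (hφ.1 v).2

lemma IsFIW.sum_le_fracIndepNum {V : Type*} [Fintype V] {G : SimpleGraph V} {φ : V → ℝ}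
    (hφ : IsFIW G φ) : ∑ v, φ v ≤ fracIndepNum G :=
  le_csSup ⟨Fintype.card V, by rintro _ ⟨ψ, hψ, rfl⟩; exact hψ.sum_le_card⟩ ⟨φ, hφ, rfl⟩

lemma IsIndepSet.card_le_of_cliqueCover {V W : Type*} [Fintype W] {G : SimpleGraph V}
    {s : Finset V} (hs : IsIndepSet G s) (f : V → W)
    (hf : ∀ u w, u ≠ w → f u = f w → G.Adj u w) : s.card ≤ Fintype.card W :=
  Finset.card_le_card_of_injOn f (fun _ _ => mem_coe.2 (mem_univ _))
    fun u hu w hw huw => by_contra fun hne => hs hu hw hne (hf u w hne huw)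

lemma indepNum_le_of_cliqueCover {V W : Type*} [Fintype V] [Fintype W] {G : SimpleGraph V}
    (f : V → W) (hf : ∀ u w, u ≠ w → f u = f w → G.Adj u w) :
    indepNum G ≤ Fintype.card W :=
  csSup_le' fun _ ⟨_, hs, hcard⟩ => hcard ▸ hs.card_le_of_cliqueCover f hf

def cliqueWithPendantCherry (m : ℕ) : SimpleGraph (Fin m) :=
  SimpleGraph.fromRel fun x y =>
    (x.val ≤ 1 ∧ y.val = 2) ∨ (x.val = 2 ∧ y.val = 3) ∨ (3 ≤ x.val ∧ 3 ≤ y.val)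

noncomputable def cherryWeight (m : ℕ) (v : Fin m) : ℝ :=
  if v.val ≤ 1 then 1 else if v.val = 2 then 0 else 1 / 2

def cherryCliqueCover (m : ℕ) (v : Fin m) : Fin 3 :=
  if v.val = 1 then 1 else if 3 ≤ v.val then 2 else 0

lemma isFIW_cherryWeight (m : ℕ) : IsFIW (cliqueWithPendantCherry m) (cherryWeight m) := by
  refine ⟨fun v => ?_, fun u w huw => ?_⟩
  · unfold cherryWeight
    split_ifs <;> norm_num
  · obtain ⟨-, h⟩ := (SimpleGraph.fromRel_adj _ u w).1 huw
    unfold cherryWeight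
    split_ifs <;> norm_num <;> omega

lemma sum_cherryWeight (a : ℕ) : ∑ v, cherryWeight (a + 3) v = 2 + a / 2 := by
  simp [Fin.sum_univ_succ, cherryWeight, ← add_assoc, one_add_one_eq_two, div_eq_mul_inv]

lemma indepNum_cliqueWithPendantCherry_le (m : ℕ) :
    indepNum (cliqueWithPendantCherry m) ≤ 3 := by
  refine (indepNum_le_of_cliqueCover (cherryCliqueCover m) fun u w hne huw => ?_).trans_eq
    (Fintype.card_fin 3)
  refine (SimpleGraph.fromRel_adj _ u w).2 ⟨hne, ?_⟩
  unfold cherryCliqueCover at huw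
  split_ifs at huw <;> omega

/-- There are infinitely many (pairwise non-isomorphic, since of unboundedly many orders)
graphs `G` with `α*(G) > max (α(G), |V(G)|/2)`. -/
theorem stmt_6 : ∀ n : ℕ, ∃ (m : ℕ) (G : SimpleGraph (Fin m)),
    n < m ∧ fracIndepNum G > max ((indepNum G : ℝ)) ((m : ℝ) / 2) := by
  intro n
  refine ⟨n + 3 + 3, cliqueWithPendantCherry (n + 3 + 3), by omega, ?_⟩
  have hfrac := (isFIW_cherryWeight (n + 3 + 3)).sum_le_fracIndepNum
  rw [sum_cherryWeight] at hfrac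
  have hα : (indepNum (cliqueWithPendantCherry (n + 3 + 3)) : ℝ) ≤ 3 := by
    exact_mod_cast indepNum_cliqueWithPendantCherry_le _
  push_cast at hfrac ⊢
  have hn : (0 : ℝ) ≤ n := n.cast_nonneg
  exact max_lt (by linarith) (by linarith)
end

section
/- If G is a graph with n vertices and independence number at most α, where α divides n, then for every k the number of independent sets of size k in G is at most the number of independent sets of size k in the disjoint union of α cliques each of size n/α, namely C(α,k)·(n/α)^k. -/
open Finset

/-!
Induction on `α`, for the independent sets inside an arbitrary vertex set `W`. Pick `v ∈ W`
whose set `N` of non-neighbours in `W` is largest, say `|N| = d`. An independent `(m+1)`-set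
either lies in `N`, or contains some `u ∈ W \ N`, and then the rest of it is an independent
`m`-set among the at most `d` non-neighbours of `u`. All these vertex sets have independence
number at most `α - 1`, so by induction the count is at most
`C(α-1, m+1) x^(m+1) + (|W| - d) C(α-1, m) x^m` with `x = d/(α-1)`. Bernoulli's inequality
`x^m ((m+1) z - m x) ≤ z^(m+1)` with `z = |W|/α` bounds this by `C(α, m+1) z^(m+1)`.
-/

theorem pow_mul_sub_le_pow_succ {x z : ℝ} (hx : 0 ≤ x) (hz : 0 ≤ z) (m : ℕ) :
    x ^ m * ((m + 1) * z - m * x) ≤ z ^ (m + 1) := by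
  have h := pow_add_mul_le_add_pow hx (b := z - x) (by linarith) (m + 1)
  rw [add_sub_cancel, Nat.add_sub_cancel] at h
  push_cast at h
  linear_combination h

theorem choose_mul_pow_add_le {x z : ℝ} (hx : 0 ≤ x) (hz : 0 ≤ z) (c m : ℕ) :
    c.choose (m + 1) * x ^ (m + 1) + ((c + 1) * z - c * x) * c.choose m * x ^ m ≤
      (c + 1).choose (m + 1) * z ^ (m + 1) := by
  have pascal : ((c + 1).choose (m + 1) : ℝ) = c.choose m + c.choose (m + 1) := by
    exact_mod_cast Nat.choose_succ_succ c m
  have absorb : ((c : ℝ) + 1) * c.choose m = (c + 1).choose (m + 1) * (m + 1) := by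
    exact_mod_cast Nat.add_one_mul_choose_eq c m
  have key := mul_le_mul_of_nonneg_left (pow_mul_sub_le_pow_succ hx hz m)
    (by positivity : (0 : ℝ) ≤ (c + 1) * c.choose m)
  refine le_of_mul_le_mul_right ?_ (by positivity : (0 : ℝ) < m + 1)
  linear_combination key - (m + 1) * x ^ (m + 1) * pascal + (z ^ (m + 1) - x ^ (m + 1)) * absorb

section

variable {V : Type*} (G : SimpleGraph V)

open Classical in
noncomputable def indepSetsIn (W : Finset V) (k : ℕ) : Finset (Finset V) :=
  {t ∈ W.powersetCard k | IsIndepSet G t}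

open Classical in
noncomputable def nonNeighborsIn (W : Finset V) (u : V) : Finset V :=
  {w ∈ W | w ≠ u ∧ ¬G.Adj u w}

variable {G}

theorem mem_indepSetsIn {W t : Finset V} {k : ℕ} :
    t ∈ indepSetsIn G W k ↔ t ⊆ W ∧ #t = k ∧ IsIndepSet G t := by
  simp [indepSetsIn, and_assoc]

theorem mem_nonNeighborsIn {W : Finset V} {u w : V} :
    w ∈ nonNeighborsIn G W u ↔ w ∈ W ∧ w ≠ u ∧ ¬G.Adj u w := by
  simp [nonNeighborsIn]

theorem nonNeighborsIn_subset (W : Finset V) (u : V) : nonNeighborsIn G W u ⊆ W :=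
  fun _ hw => (mem_nonNeighborsIn.mp hw).1

theorem indepSetsIn_zero (W : Finset V) : indepSetsIn G W 0 = {∅} := by
  ext t
  simp only [mem_indepSetsIn, card_eq_zero, mem_singleton]
  constructor
  · exact fun h => h.2.1
  · rintro rfl
    simp [IsIndepSet]

theorem card_le_of_subset_nonNeighborsIn {W : Finset V} {u : V} {c : ℕ}
    (hW : ∀ t ⊆ W, IsIndepSet G t → #t ≤ c + 1) (hu : u ∈ W) :
    ∀ t ⊆ nonNeighborsIn G W u, IsIndepSet G t → #t ≤ c := by
  classical
  intro t ht hind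
  have hut : u ∉ t := fun h => (mem_nonNeighborsIn.mp (ht h)).2.1 rfl
  have hins : IsIndepSet G ↑(insert u t) := by
    rw [coe_insert, IsIndepSet, Set.pairwise_insert]
    refine ⟨hind, fun w hw _ => ?_⟩
    have := (mem_nonNeighborsIn.mp (ht hw)).2.2
    exact ⟨this, fun h => this h.symm⟩
  have := hW (insert u t) (insert_subset hu (ht.trans (nonNeighborsIn_subset W u))) hins
  rw [card_insert_of_notMem hut] at this
  omega

theorem indepSetsIn_eq_empty {W : Finset V} {α k : ℕ}
    (hW : ∀ t ⊆ W, IsIndepSet G t → #t ≤ α) (hk : α < k) : indepSetsIn G W k = ∅ :=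
  eq_empty_of_forall_notMem fun t ht => by
    obtain ⟨htW, rfl, hind⟩ := mem_indepSetsIn.mp ht
    exact (hW t htW hind).not_gt hk

theorem card_filter_mem_indepSetsIn_le [DecidableEq V] (W : Finset V) (u : V) (m : ℕ) :
    #{t ∈ indepSetsIn G W (m + 1) | u ∈ t} ≤ #(indepSetsIn G (nonNeighborsIn G W u) m) := by
  refine card_le_card_of_injOn (fun t => t.erase u) (fun t ht => ?_)
    ((erase_injOn' u).mono fun t ht => (mem_filter.mp ht).2)
  obtain ⟨ht, hut⟩ := mem_filter.mp ht
  obtain ⟨hW, hcard, hind⟩ := mem_indepSetsIn.mp ht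
  refine mem_indepSetsIn.mpr ⟨fun w hw => ?_, by simp [card_erase_of_mem hut, hcard],
    hind.mono (by simp)⟩
  obtain ⟨hwu, hwt⟩ := mem_erase.mp hw
  exact mem_nonNeighborsIn.mpr ⟨hW hwt, hwu, hind hut hwt hwu.symm⟩

theorem card_indepSetsIn_succ_le [DecidableEq V] (W S : Finset V) (m : ℕ) :
    #(indepSetsIn G W (m + 1)) ≤ #(indepSetsIn G S (m + 1)) +
      ∑ u ∈ W \ S, #(indepSetsIn G (nonNeighborsIn G W u) m) := by
  have hcover : indepSetsIn G W (m + 1) ⊆ indepSetsIn G S (m + 1) ∪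
      (W \ S).biUnion fun u => {t ∈ indepSetsIn G W (m + 1) | u ∈ t} := by
    intro t ht
    obtain ⟨hW, hcard, hind⟩ := mem_indepSetsIn.mp ht
    by_cases hS : t ⊆ S
    · exact mem_union_left _ (mem_indepSetsIn.mpr ⟨hS, hcard, hind⟩)
    · obtain ⟨u, hut, huS⟩ := not_subset.mp hS
      exact mem_union_right _ (mem_biUnion.mpr ⟨u, mem_sdiff.mpr ⟨hW hut, huS⟩,
        mem_filter.mpr ⟨ht, hut⟩⟩)
  calc #(indepSetsIn G W (m + 1))
      ≤ #(indepSetsIn G S (m + 1)) +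
          #((W \ S).biUnion fun u => {t ∈ indepSetsIn G W (m + 1) | u ∈ t}) :=
        (card_le_card hcover).trans (card_union_le _ _)
    _ ≤ _ := by
      gcongr
      exact card_biUnion_le.trans (sum_le_sum fun u _ => card_filter_mem_indepSetsIn_le W u m)

theorem card_indepSetsIn_le {α : ℕ} {W : Finset V} (hW : ∀ t ⊆ W, IsIndepSet G t → #t ≤ α)
    (k : ℕ) : (#(indepSetsIn G W k) : ℝ) ≤ α.choose k * (#W / α) ^ k := by
  classical
  induction α generalizing W k with
  | zero =>
    rcases k with _ | m
    · simp [indepSetsIn_zero]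
    · simp [indepSetsIn_eq_empty hW m.succ_pos]
  | succ c ih =>
    rcases k with _ | m
    · simp [indepSetsIn_zero]
    rcases W.eq_empty_or_nonempty with rfl | hne
    · simp [indepSetsIn]
    obtain ⟨v, hvW, hv⟩ := exists_max_image W (fun u => #(nonNeighborsIn G W u)) hne
    set d : ℝ := ↑(#(nonNeighborsIn G W v))
    have hbound : ∀ u ∈ W, (#(indepSetsIn G (nonNeighborsIn G W u) m) : ℝ) ≤
        c.choose m * (d / c) ^ m := fun u hu =>
      (ih (card_le_of_subset_nonNeighborsIn hW hu) m).trans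
        (by gcongr; exact Nat.cast_le.mpr (hv u hu))
    -- not an equality when `c = 0`, as then `d / c = 0`
    have hcd : (c : ℝ) * (d / c) ≤ d := by
      rcases eq_or_ne (c : ℝ) 0 with hc | hc
      · simp [hc, d]
      · rw [mul_div_cancel₀ _ hc]
    calc (#(indepSetsIn G W (m + 1)) : ℝ)
        ≤ #(indepSetsIn G (nonNeighborsIn G W v) (m + 1)) +
            ∑ u ∈ W \ nonNeighborsIn G W v, (#(indepSetsIn G (nonNeighborsIn G W u) m) : ℝ) := by
          exact_mod_cast card_indepSetsIn_succ_le W (nonNeighborsIn G W v) m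
      _ ≤ c.choose (m + 1) * (d / c) ^ (m + 1) +
            ∑ u ∈ W \ nonNeighborsIn G W v, (c.choose m * (d / c) ^ m : ℝ) := by
          gcongr with u hu
          · exact ih (card_le_of_subset_nonNeighborsIn hW hvW) _
          · exact hbound u (mem_sdiff.mp hu).1
      _ = c.choose (m + 1) * (d / c) ^ (m + 1) + (#W - d) * c.choose m * (d / c) ^ m := by
          rw [sum_const, card_sdiff_of_subset (nonNeighborsIn_subset W v), nsmul_eq_mul,
            Nat.cast_sub (card_le_card (nonNeighborsIn_subset W v))]
          ring
      _ ≤ c.choose (m + 1) * (d / c) ^ (m + 1) +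
            ((c + 1) * (#W / (c + 1)) - c * (d / c)) * c.choose m * (d / c) ^ m := by
          rw [mul_div_cancel₀ _ (by positivity)]
          gcongr
      _ ≤ (c + 1).choose (m + 1) * (#W / (c + 1)) ^ (m + 1) :=
          choose_mul_pow_add_le (by positivity) (by positivity) c m
      _ = _ := by push_cast; ring

theorem card_le_indepNum [Fintype V] {t : Finset V} (ht : IsIndepSet G t) : #t ≤ indepNum G :=
  le_csSup ⟨Fintype.card V, by rintro _ ⟨s, -, rfl⟩; exact card_le_univ s⟩ ⟨t, ht, rfl⟩

end

/-- If `G` has `n` vertices and independence number at most `α`, where `α ∣ n`, then the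
number of independent sets of size `k` in `G` is at most `C(α,k)·(n/α)^k`, the count for
the disjoint union of `α` cliques of size `n/α`. -/
theorem stmt_7 {V : Type*} [Fintype V] (G : SimpleGraph V) (n α k : ℕ)
    (hn : Fintype.card V = n) (hα : indepNum G ≤ α) (hd : α ∣ n) :
    Nat.card {s : Finset V // s.card = k ∧ IsIndepSet G ↑s} ≤
      Nat.choose α k * (n / α) ^ k := by
  classical
  have hcount : Nat.card {s : Finset V // s.card = k ∧ IsIndepSet G ↑s} =
      #(indepSetsIn G univ k) := by
    rw [Nat.card_eq_fintype_card, Fintype.card_subtype]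
    congr 1
    ext t
    simp [mem_indepSetsIn]
  have hbound := card_indepSetsIn_le (W := univ) (fun t _ ht => (card_le_indepNum ht).trans hα) k
  rw [card_univ, hn] at hbound
  rw [hcount, ← Nat.cast_le (α := ℝ)]
  push_cast [Nat.cast_div_charZero hd]
  exact hbound
end

section
/- Define for β ∈ (0, 0.016) the functions f_K(β) = β³ and f_S(β) = r³(6r²b + 9rb² + 3b³) where r = 1 − √(1−β) and b = √(1−β). Then f_K(β) > f_S(β) for all β ∈ (0, 0.016). -/
/-- For `0 < β < 0.016`, the quasi-clique count `f_K(β) = β³` for `G₆` exceeds the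
quasi-star count `f_S(β) = r³(6r²b + 9rb² + 3b³)`, where `r = 1 − √(1−β)` and
`b = √(1−β)`. -/
theorem stmt_16 (β r b : ℝ) (h0 : 0 < β) (h1 : β < 0.016)
    (hr : r = 1 - Real.sqrt (1 - β)) (hb : b = Real.sqrt (1 - β)) :
    β ^ 3 > r ^ 3 * (6 * r ^ 2 * b + 9 * r * b ^ 2 + 3 * b ^ 3) := by
  have hb0 : 0 ≤ b := hb ▸ Real.sqrt_nonneg _
  have hb2 : b ^ 2 = 1 - β := by
    rw [hb, Real.sq_sqrt (by linarith)]
  have hb1 : b < 1 := by nlinarith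
  have hrb : r = 1 - b := by rw [hr, hb]
  subst hrb
  have hβ : β = (1 - b) * (1 + b) := by nlinarith
  rw [hβ]
  have hpos : 0 < 1 - b := by linarith
  have key : 1 - 3 * b + 6 * b ^ 2 + b ^ 3 > 0 := by nlinarith [sq_nonneg (4 * b - 1)]
  nlinarith [pow_pos hpos 3, mul_pos (pow_pos hpos 3) key]
end

section
/- Define for β ∈ (0, 0.016): y = √(β/2), r = 1 − √(1 − β/2), b = √(1 − β/2) − √(β/2), and f_T(β) = (y+r)⁶ + 2(y+r)³r²b + 2(y+r)²r³b + 2(y+r)⁴rb + 2r⁴b² + 6(y+r)r³b² + (y+r)³rb² + 3r³b³. Then f_T(β) > β³ for all β ∈ (0, 0.016). -/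
set_option maxHeartbeats 1000000


/-- For `0 < β < 0.016`, the count `f_T(β)` of copies of `G₆` in `T_n^e(1/√2)` exceeds
the quasi-clique count `β³`. -/
theorem stmt_17 (β y r b : ℝ) (h0 : 0 < β) (h1 : β < 0.016)
    (hy : y = Real.sqrt (β / 2)) (hr : r = 1 - Real.sqrt (1 - β / 2))
    (hb : b = Real.sqrt (1 - β / 2) - Real.sqrt (β / 2)) :
    (y + r) ^ 6 + 2 * (y + r) ^ 3 * r ^ 2 * b + 2 * (y + r) ^ 2 * r ^ 3 * b +
        2 * (y + r) ^ 4 * r * b + 2 * r ^ 4 * b ^ 2 + 6 * (y + r) * r ^ 3 * b ^ 2 +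
        (y + r) ^ 3 * r * b ^ 2 + 3 * r ^ 3 * b ^ 3 > β ^ 3 := by
  set s := Real.sqrt (β / 2) with hsdef
  set t := Real.sqrt (1 - β / 2) with htdef
  have hβ2 : (0:ℝ) ≤ β / 2 := by linarith
  have h1' : (0:ℝ) ≤ 1 - β / 2 := by linarith
  have hs2 : s ^ 2 = β / 2 := Real.sq_sqrt hβ2
  have ht2 : t ^ 2 = 1 - β / 2 := Real.sq_sqrt h1'
  have hs0 : 0 < s := Real.sqrt_pos.mpr (by linarith)
  have ht0 : 0 ≤ t := Real.sqrt_nonneg _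
  have hβ : β = 2 * s ^ 2 := by linarith
  have hslt : s ^ 2 < 1 / 125 := by rw [hs2]; linarith
  have ht2' : t ^ 2 = 1 - s ^ 2 := by rw [ht2]; linarith
  have hs10 : s < 1 / 10 := by nlinarith
  -- the two coefficient polynomials
  set A : ℝ := -4 + 13 * s ^ 2 + 17 * s ^ 3 + 17 * s ^ 4 - 6 * s ^ 5 - 18 * s ^ 6 with hA
  set B : ℝ := 4 - 11 * s ^ 2 - 17 * s ^ 3 - 22 * s ^ 4 - 2 * s ^ 5 with hB
  have hBpos : 0 < B := by
    have h3 : s ^ 3 < 1 / 1250 := by nlinarith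
    have h4 : s ^ 4 < 1 / 12500 := by nlinarith
    have h5 : s ^ 5 < 1 / 125000 := by nlinarith
    rw [hB]; nlinarith
  have hAneg : A < 0 := by
    have h3 : s ^ 3 < 1 / 1250 := by nlinarith
    have h4 : s ^ 4 < 1 / 12500 := by nlinarith
    have h5 : s ^ 5 < 1 / 125000 := by nlinarith
    have h6 : s ^ 6 < 1 / 1250000 := by nlinarith
    rw [hA]; nlinarith
  -- the key discriminant inequality: B^2 * (1 - s^2) > A^2
  have hg : 0 < 4 - 47 * s + 12 * s ^ 2 + 162 * s ^ 3 + 112 * s ^ 4 + 28 * s ^ 5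
      - 304 * s ^ 6 - 328 * s ^ 7 := by
    nlinarith [mul_nonneg hs0.le (sub_nonneg.mpr hslt.le),
      mul_nonneg (mul_nonneg hs0.le hs0.le) (sub_nonneg.mpr hslt.le),
      sq_nonneg (s - 1 / 12), mul_nonneg hs0.le (sq_nonneg (s - 1 / 12)),
      mul_nonneg (mul_nonneg hs0.le hs0.le) hs0.le, sq_nonneg s]
  have hQ : B ^ 2 * (1 - s ^ 2) - A ^ 2 > 0 := by
    have : B ^ 2 * (1 - s ^ 2) - A ^ 2 = s ^ 5 *
        (4 - 47 * s + 12 * s ^ 2 + 162 * s ^ 3 + 112 * s ^ 4 + 28 * s ^ 5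
          - 304 * s ^ 6 - 328 * s ^ 7) := by rw [hA, hB]; ring
    rw [this]
    exact mul_pos (pow_pos hs0 5) hg
  -- hence B * t > -A
  have hkey : A + B * t > 0 := by
    nlinarith [mul_nonneg hBpos.le ht0, hQ, ht2', sq_nonneg (B * t + A)]
  -- conclude via the polynomial identity
  subst hy hr hb
  rw [show β ^ 3 = 8 * s ^ 6 from by rw [hβ]; ring]
  have hid : (s + (1 - t)) ^ 6 + 2 * (s + (1 - t)) ^ 3 * (1 - t) ^ 2 * (t - s) +
      2 * (s + (1 - t)) ^ 2 * (1 - t) ^ 3 * (t - s) +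
      2 * (s + (1 - t)) ^ 4 * (1 - t) * (t - s) + 2 * (1 - t) ^ 4 * (t - s) ^ 2 +
      6 * (s + (1 - t)) * (1 - t) ^ 3 * (t - s) ^ 2 +
      (s + (1 - t)) ^ 3 * (1 - t) * (t - s) ^ 2 + 3 * (1 - t) ^ 3 * (t - s) ^ 3
      = 8 * s ^ 6 + (A + B * t) := by
    rw [hA, hB]
    linear_combination (-5 + 4 * t + t ^ 2 - 3 * t ^ 3 + t ^ 4 + 2 * s ^ 2 + 6 * s ^ 2 * t
      - 3 * s ^ 2 * t ^ 2 + 11 * s ^ 3 - 3 * s ^ 3 * t + 11 * s ^ 4) * ht2'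
  linarith [hid, hkey]
end
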